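/- arXiv:1403.1235 — 7 statements merged into one kernel-verified Lean document; each statement's English description precedes it below -/
import Mathlib

section
/- Let σ ∈ ℂ with 2σ ∉ ℤ. Then the conformal block series B(σ,t) = Σ_{λ,μ∈𝕐} (dim λ · dim μ / (|λ|! |μ|!))² t^{|λ|+|μ|} / b_{λ,μ}(σ)² converges absolutely for every t ∈ ℂ, and the convergence is uniform on every bounded subset of ℂ. -/
open scoped BigOperators

/-- The number of standard Young tableaux of shape `μ`: bijective labelings of the
cells of `μ` by `{0, …, |μ|-1}` that are monotone for the product (componentwise)
order on cells. -/
noncomputable def dimSYT (μ : YoungDiagram) : ℕ :=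
  Nat.card {T : {c // c ∈ μ.cells} ≃ Fin μ.card //
    ∀ c d : {c // c ∈ μ.cells},
      (c : ℕ × ℕ).1 ≤ (d : ℕ × ℕ).1 → (c : ℕ × ℕ).2 ≤ (d : ℕ × ℕ).2 → T c ≤ T d}

/-- `b_{λ,μ}(σ) = ∏_{(k,l)∈λ}(λ'_l − k + μ_k − l + 1 + 2σ) ·
∏_{(k,l)∈μ}(μ'_l − k + λ_k − l + 1 − 2σ)`, written in 0-based coordinates. -/
noncomputable def bFactor (l m : YoungDiagram) (σ : ℂ) : ℂ :=
  (∏ c ∈ l.cells, ((l.colLen c.2 : ℂ) - c.1 + m.rowLen c.1 - c.2 - 1 + 2 * σ)) *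
  (∏ c ∈ m.cells, ((m.colLen c.2 : ℂ) - c.1 + l.rowLen c.1 - c.2 - 1 - 2 * σ))

/-- The general term of the conformal block series `B(σ,t)`. -/
noncomputable def blockTerm (σ t : ℂ) (p : YoungDiagram × YoungDiagram) : ℂ :=
  ((dimSYT p.1 * dimSYT p.2 : ℂ) / ((Nat.factorial p.1.card) * (Nat.factorial p.2.card))) ^ 2
    * t ^ (p.1.card + p.2.card) / (bFactor p.1 p.2 σ) ^ 2

/-!
Since `2σ ∉ ℤ`, every factor of `b_{λ,μ}(σ)` is an integer plus `±2σ`, hence has modulus at least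
the distance `δ > 0` from `2σ` to `ℤ`; so `|b_{λ,μ}(σ)| ≥ δ^(|λ|+|μ|)`. Standard Young tableaux
increase along the rows and along the first column, which gives `dim λ · ∏ᵢ λᵢ! ≤ |λ|!` and
`dim λ · ℓ(λ)! ≤ |λ|!`. Hence for `|t| ≤ C` the terms are dominated by `w(λ) w(μ)` with
`w(λ) = q^|λ| / (ℓ(λ)! ∏ᵢ λᵢ!)` and `q = C / δ²`. Reading `λ` as the tuple of its row lengths,
`∑_λ w(λ) ≤ ∑_L (e^q)^L / L! < ∞`, and the Weierstrass M-test concludes.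
-/

open Finset
open scoped Nat

lemma exists_pos_le_norm_intCast_add {z : ℂ} (hz : ∀ n : ℤ, z ≠ n) :
    ∃ δ > 0, ∀ n : ℤ, δ ≤ ‖(n : ℂ) + z‖ := by
  refine ⟨Metric.infDist z (Set.range ((↑) : ℤ → ℂ)),
    (Complex.isClosed_range_intCast.notMem_iff_infDist_pos (Set.range_nonempty _)).1
      fun ⟨n, hn⟩ => hz n hn.symm, fun n => ?_⟩
  calc Metric.infDist z _ ≤ dist z ((-n : ℤ) : ℂ) :=
        Metric.infDist_le_dist_of_mem (Set.mem_range_self _)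
    _ = ‖(n : ℂ) + z‖ := by rw [dist_eq_norm, Int.cast_neg, sub_neg_eq_add, add_comm]

lemma pow_card_le_norm_prod {ι R : Type*} [SeminormedCommRing R] [NormMulClass R]
    [NormOneClass R] {s : Finset ι} {f : ι → R} {δ : ℝ} (hδ : 0 ≤ δ)
    (hf : ∀ i ∈ s, δ ≤ ‖f i‖) : δ ^ s.card ≤ ‖∏ i ∈ s, f i‖ := by
  rw [norm_prod, ← prod_const]
  exact prod_le_prod (fun _ _ => hδ) hf

lemma pow_card_add_card_le_norm_bFactor {σ : ℂ} {δ : ℝ} (hδ : 0 ≤ δ)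
    (hσ : ∀ n : ℤ, δ ≤ ‖(n : ℂ) + 2 * σ‖) (l m : YoungDiagram) :
    δ ^ (l.card + m.card) ≤ ‖bFactor l m σ‖ := by
  rw [bFactor, norm_mul, pow_add]
  gcongr
  · refine pow_card_le_norm_prod hδ fun c _ =>
      (hσ (l.colLen c.2 - c.1 + m.rowLen c.1 - c.2 - 1)).trans_eq
        (congrArg norm (by push_cast; ring))
  · refine pow_card_le_norm_prod hδ fun c _ =>
      (hσ (-(m.colLen c.2 : ℤ) + c.1 - l.rowLen c.1 + c.2 + 1)).trans_eq
        ((norm_neg _).symm.trans (congrArg norm (by push_cast; ring)))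

section BlockMonotone

variable {ι : Type*} {r : ι → ℕ} {γ : Type*} [LinearOrder γ]

lemma eq_of_sigmaCongrRight_trans_eq {T T' : (Σ i, Fin (r i)) ≃ γ}
    (hT : ∀ i, Monotone fun j => T ⟨i, j⟩) (hT' : ∀ i, Monotone fun j => T' ⟨i, j⟩)
    {g g' : ∀ i, Equiv.Perm (Fin (r i))}
    (h : (Equiv.sigmaCongrRight g).trans T = (Equiv.sigmaCongrRight g').trans T') :
    T = T' ∧ g = g' := by
  have hblock (i : ι) : (fun j => T ⟨i, j⟩) = fun j => T' ⟨i, j⟩ := by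
    have hinj (T : (Σ i, Fin (r i)) ≃ γ) : Function.Injective fun j => T ⟨i, j⟩ :=
      T.injective.comp sigma_mk_injective
    refine (((hT i).strictMono_of_injective (hinj T)).range_inj
      ((hT' i).strictMono_of_injective (hinj T'))).1 ?_
    have := congrArg (fun E : (Σ i, Fin (r i)) ≃ γ => Set.range fun j => E ⟨i, j⟩) h
    simp only [Equiv.trans_apply, Equiv.sigmaCongrRight_apply] at this
    rwa [Set.range_comp' (fun j => T ⟨i, j⟩) (g i), Set.range_comp' (fun j => T' ⟨i, j⟩) (g' i),
      (g i).range_eq_univ, (g' i).range_eq_univ, Set.image_univ, Set.image_univ] at this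
  obtain rfl : T = T' := Equiv.ext fun ⟨i, j⟩ => congrFun (hblock i) j
  refine ⟨rfl, funext fun i => Equiv.ext fun j => ?_⟩
  have := congrArg (fun E : (Σ i, Fin (r i)) ≃ γ => E ⟨i, j⟩) h
  simpa using this

/-- Permuting inside the blocks acts freely on all bijections, and each orbit contains at most
one bijection that is monotone on every block. -/
lemma card_blockMonotone_mul_prod_factorial_le [Fintype ι] [Finite γ] :
    Nat.card {T : (Σ i, Fin (r i)) ≃ γ // ∀ i, Monotone fun j => T ⟨i, j⟩} * ∏ i, (r i)! ≤
      Nat.card ((Σ i, Fin (r i)) ≃ γ) := by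
  have hinj : Function.Injective fun p : {T : (Σ i, Fin (r i)) ≃ γ //
      ∀ i, Monotone fun j => T ⟨i, j⟩} × (∀ i, Equiv.Perm (Fin (r i))) =>
        (Equiv.sigmaCongrRight p.2).trans p.1.1 := by
    rintro ⟨⟨T, hT⟩, g⟩ ⟨⟨T', hT'⟩, g'⟩ h
    obtain ⟨rfl, rfl⟩ := eq_of_sigmaCongrRight_trans_eq hT hT' h
    rfl
  simpa only [Nat.card_prod, Nat.card_pi, Nat.card_eq_fintype_card,
    Fintype.card_perm, Fintype.card_fin] using Nat.card_le_card_of_injective _ hinj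

end BlockMonotone

lemma hasSum_prod_fin {α : Type*} {w : α → ℝ} (hw : 0 ≤ w) {s : ℝ} (hs : HasSum w s) (L : ℕ) :
    HasSum (fun v : Fin L → α => ∏ k, w (v k)) (s ^ L) := by
  induction L with
  | zero => simp
  | succ L ih =>
    have hprod_nonneg : 0 ≤ fun v : Fin L → α => ∏ k, w (v k) :=
      fun v => prod_nonneg fun k _ => hw (v k)
    have hsum := hs.summable.mul_of_nonneg ih.summable hw hprod_nonneg
    have hpair := hs.mul ih hsum
    rw [← (Fin.consEquiv fun _ => α).symm.hasSum_iff] at hpair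
    rw [pow_succ']
    refine hpair.congr_fun fun v => ?_
    simp only [Function.comp_apply, Fin.prod_univ_succ]
    rfl

noncomputable def tupleWeight (q : ℝ) (x : Σ L : ℕ, Fin L → ℕ) : ℝ :=
  (∏ k, q ^ x.2 k / (x.2 k)!) / x.1 !

lemma summable_tupleWeight {q : ℝ} (hq : 0 ≤ q) : Summable (tupleWeight q) := by
  have hw : 0 ≤ fun j : ℕ => q ^ j / j ! := fun j => by positivity
  have hs := (Real.summable_pow_div_factorial q).hasSum
  have hL (L : ℕ) := (hasSum_prod_fin hw hs L).div_const (L ! : ℝ)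
  refine (summable_sigma_of_nonneg fun x => by unfold tupleWeight; positivity).2
    ⟨fun L => (hL L).summable, ?_⟩
  convert Real.summable_pow_div_factorial (∑' j, q ^ j / j !) using 1 with L
  exact funext fun L => (hL L).tsum_eq

namespace YoungDiagram

def cellsEquivSigmaRow (μ : YoungDiagram) :
    {c // c ∈ μ.cells} ≃ Σ i : Fin (μ.colLen 0), Fin (μ.rowLen i) where
  toFun c := ⟨⟨c.1.1, (mem_iff_lt_colLen.mp ((μ.mem_cells _).mp c.2)).trans_le
      (μ.colLen_anti 0 _ (Nat.zero_le _))⟩,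
    ⟨c.1.2, mem_iff_lt_rowLen.mp ((μ.mem_cells _).mp c.2)⟩⟩
  invFun x := ⟨(x.1, x.2), (μ.mem_cells _).mpr (mem_iff_lt_rowLen.mpr x.2.isLt)⟩
  left_inv _ := rfl
  right_inv _ := rfl

def cellsEquivSigmaCol (μ : YoungDiagram) :
    {c // c ∈ μ.cells} ≃ Σ j : Fin (μ.rowLen 0), Fin (μ.colLen j) where
  toFun c := ⟨⟨c.1.2, (mem_iff_lt_rowLen.mp ((μ.mem_cells _).mp c.2)).trans_le
      (μ.rowLen_anti 0 _ (Nat.zero_le _))⟩,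
    ⟨c.1.1, mem_iff_lt_colLen.mp ((μ.mem_cells _).mp c.2)⟩⟩
  invFun x := ⟨(x.2, x.1), (μ.mem_cells _).mpr (mem_iff_lt_colLen.mpr x.2.isLt)⟩
  left_inv _ := rfl
  right_inv _ := rfl

lemma card_eq_sum_rowLen (μ : YoungDiagram) : μ.card = ∑ i : Fin (μ.colLen 0), μ.rowLen i := by
  simpa using Fintype.card_congr μ.cellsEquivSigmaRow

lemma dimSYT_mul_prod_factorial_le (μ : YoungDiagram) {ι : Type*} [Fintype ι] {r : ι → ℕ}
    (e : {c // c ∈ μ.cells} ≃ Σ i, Fin (r i))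
    (he : ∀ i, Monotone fun j => (e.symm ⟨i, j⟩ : ℕ × ℕ)) :
    dimSYT μ * ∏ i, (r i)! ≤ μ.card ! := by
  let restrict (T : {T : {c // c ∈ μ.cells} ≃ Fin μ.card // ∀ c d : {c // c ∈ μ.cells},
      (c : ℕ × ℕ).1 ≤ (d : ℕ × ℕ).1 → (c : ℕ × ℕ).2 ≤ (d : ℕ × ℕ).2 → T c ≤ T d}) :
      {T : (Σ i, Fin (r i)) ≃ Fin μ.card // ∀ i, Monotone fun j => T ⟨i, j⟩} :=
    ⟨e.symm.trans T.1, fun i _ _ hjj' => T.2 _ _ (he i hjj').1 (he i hjj').2⟩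
  have hrestrict : Function.Injective restrict := fun T T' h =>
    Subtype.ext <| Equiv.ext fun c => by simpa [restrict] using congrArg (fun E => E.1 (e c)) h
  calc dimSYT μ * ∏ i, (r i)!
      ≤ Nat.card {T : (Σ i, Fin (r i)) ≃ Fin μ.card // ∀ i, Monotone fun j => T ⟨i, j⟩} *
          ∏ i, (r i)! := Nat.mul_le_mul_right _ (Nat.card_le_card_of_injective _ hrestrict)
    _ ≤ Nat.card ((Σ i, Fin (r i)) ≃ Fin μ.card) := card_blockMonotone_mul_prod_factorial_le
    _ = μ.card ! := by
      rw [Nat.card_congr (e.symm.equivCongr (.refl _)), Nat.card_eq_fintype_card,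
        Fintype.card_equiv (Fintype.equivFinOfCardEq (Fintype.card_coe _)), Fintype.card_coe]

lemma dimSYT_mul_prod_factorial_rowLen_le (μ : YoungDiagram) :
    dimSYT μ * ∏ i : Fin (μ.colLen 0), (μ.rowLen i)! ≤ μ.card ! :=
  μ.dimSYT_mul_prod_factorial_le μ.cellsEquivSigmaRow fun _ _ _ h => ⟨le_rfl, h⟩

lemma dimSYT_mul_prod_factorial_colLen_le (μ : YoungDiagram) :
    dimSYT μ * ∏ j : Fin (μ.rowLen 0), (μ.colLen j)! ≤ μ.card ! :=
  μ.dimSYT_mul_prod_factorial_le μ.cellsEquivSigmaCol fun _ _ _ h => ⟨h, le_rfl⟩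

lemma factorial_colLen_zero_le_prod (μ : YoungDiagram) :
    (μ.colLen 0)! ≤ ∏ j : Fin (μ.rowLen 0), (μ.colLen j)! := by
  rcases Nat.eq_zero_or_pos (μ.rowLen 0) with h | h
  · have : μ.colLen 0 = 0 := by
      by_contra hc
      exact (mem_iff_lt_rowLen.mp (mem_iff_lt_colLen.mpr (Nat.pos_of_ne_zero hc))).ne' h
    rw [this]
    exact prod_pos fun _ _ => Nat.factorial_pos _
  · exact single_le_prod' (f := fun j : Fin (μ.rowLen 0) => (μ.colLen j)!)
      (fun _ _ => Nat.one_le_iff_ne_zero.mpr (Nat.factorial_ne_zero _)) (mem_univ ⟨0, h⟩)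

lemma dimSYT_mul_factorial_colLen_zero_le (μ : YoungDiagram) :
    dimSYT μ * (μ.colLen 0)! ≤ μ.card ! :=
  (Nat.mul_le_mul_left _ μ.factorial_colLen_zero_le_prod).trans
    μ.dimSYT_mul_prod_factorial_colLen_le

def rowTuple (μ : YoungDiagram) : Σ L : ℕ, Fin L → ℕ := ⟨μ.colLen 0, fun i => μ.rowLen i⟩

lemma rowTuple_injective : Function.Injective rowTuple := by
  rintro μ ν h
  obtain ⟨hcol, hrow⟩ := Sigma.mk.inj_iff.mp h
  have hrow := (Fin.heq_fun_iff hcol).mp hrow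
  ext ⟨i, j⟩
  simp only [mem_cells, mem_iff_lt_rowLen]
  by_cases hi : i < μ.colLen 0
  · rw [hrow ⟨i, hi⟩]
  · have hν : ¬i < ν.colLen 0 := hcol ▸ hi
    rw [← mem_iff_lt_colLen, mem_iff_lt_rowLen] at hi hν
    omega

noncomputable def rowWeight (q : ℝ) (μ : YoungDiagram) : ℝ :=
  q ^ μ.card / ((μ.colLen 0)! * ∏ i : Fin (μ.colLen 0), ((μ.rowLen i)! : ℝ))

lemma rowWeight_nonneg {q : ℝ} (hq : 0 ≤ q) (μ : YoungDiagram) : 0 ≤ rowWeight q μ := by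
  unfold rowWeight; positivity

lemma rowWeight_eq_tupleWeight (q : ℝ) (μ : YoungDiagram) :
    rowWeight q μ = tupleWeight q μ.rowTuple := by
  rw [rowWeight, tupleWeight, rowTuple, card_eq_sum_rowLen, prod_div_distrib,
    prod_pow_eq_pow_sum, div_div, mul_comm]

lemma summable_rowWeight {q : ℝ} (hq : 0 ≤ q) : Summable (rowWeight q) :=
  ((summable_tupleWeight hq).comp_injective rowTuple_injective).congr fun μ =>
    (rowWeight_eq_tupleWeight q μ).symm

lemma sq_dimSYT_div_mul_pow_le_rowWeight {q : ℝ} (hq : 0 ≤ q) (μ : YoungDiagram) :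
    ((dimSYT μ : ℝ) / μ.card !) ^ 2 * q ^ μ.card ≤ rowWeight q μ := by
  set P : ℝ := (μ.colLen 0)! * ∏ i : Fin (μ.colLen 0), ((μ.rowLen i)! : ℝ)
  have hP0 : 0 < P := by positivity
  have hrow : (dimSYT μ : ℝ) * ∏ i : Fin (μ.colLen 0), ((μ.rowLen i)! : ℝ) ≤ μ.card ! := by
    exact_mod_cast μ.dimSYT_mul_prod_factorial_rowLen_le
  have hcol : (dimSYT μ : ℝ) * (μ.colLen 0)! ≤ μ.card ! := by
    exact_mod_cast μ.dimSYT_mul_factorial_colLen_zero_le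
  have hP : (dimSYT μ : ℝ) ^ 2 * P ≤ (μ.card ! : ℝ) ^ 2 := by
    calc (dimSYT μ : ℝ) ^ 2 * P
        = (dimSYT μ * (μ.colLen 0)!) *
            (dimSYT μ * ∏ i : Fin (μ.colLen 0), ((μ.rowLen i)! : ℝ)) := by ring
      _ ≤ μ.card ! * μ.card ! := by gcongr
      _ = (μ.card ! : ℝ) ^ 2 := by ring
  calc ((dimSYT μ : ℝ) / μ.card !) ^ 2 * q ^ μ.card
      = (dimSYT μ : ℝ) ^ 2 * P / (μ.card ! : ℝ) ^ 2 * (q ^ μ.card / P) := by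
        field_simp
    _ ≤ 1 * (q ^ μ.card / P) := by
        gcongr
        exact div_le_one_of_le₀ hP (by positivity)
    _ = rowWeight q μ := one_mul _

end YoungDiagram

open YoungDiagram

lemma norm_blockTerm_le {σ t : ℂ} {δ C : ℝ} (hδ : 0 < δ)
    (hσ : ∀ n : ℤ, δ ≤ ‖(n : ℂ) + 2 * σ‖) (ht : ‖t‖ ≤ C) (p : YoungDiagram × YoungDiagram) :
    ‖blockTerm σ t p‖ ≤ rowWeight (C / δ ^ 2) p.1 * rowWeight (C / δ ^ 2) p.2 := by
  obtain ⟨l, m⟩ := p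
  set a : YoungDiagram → ℝ := fun μ => ((dimSYT μ : ℝ) / μ.card !) ^ 2
  have hC : 0 ≤ C := (norm_nonneg t).trans ht
  have hq : 0 ≤ C / δ ^ 2 := by positivity
  calc ‖blockTerm σ t (l, m)‖ = a l * a m * ‖t‖ ^ (l.card + m.card) / ‖bFactor l m σ‖ ^ 2 := by
        simp only [blockTerm, a, norm_div, norm_mul, norm_pow, Complex.norm_natCast]
        ring
    _ ≤ a l * a m * C ^ (l.card + m.card) / (δ ^ (l.card + m.card)) ^ 2 := by
        gcongr
        exact pow_card_add_card_le_norm_bFactor hδ.le hσ l m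
    _ = (a l * (C / δ ^ 2) ^ l.card) * (a m * (C / δ ^ 2) ^ m.card) := by ring
    _ ≤ rowWeight (C / δ ^ 2) l * rowWeight (C / δ ^ 2) m :=
        mul_le_mul (sq_dimSYT_div_mul_pow_le_rowWeight hq l)
          (sq_dimSYT_div_mul_pow_le_rowWeight hq m) (by positivity) (rowWeight_nonneg hq l)

lemma summable_rowWeight_mul_rowWeight {q : ℝ} (hq : 0 ≤ q) :
    Summable fun p : YoungDiagram × YoungDiagram => rowWeight q p.1 * rowWeight q p.2 :=
  (summable_rowWeight hq).mul_of_nonneg (summable_rowWeight hq) (rowWeight_nonneg hq)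
    (rowWeight_nonneg hq)

/-- For `2σ ∉ ℤ`, the conformal block series converges absolutely for every `t ∈ ℂ`,
uniformly on every bounded subset of `ℂ`. -/
theorem blockSeries_converges (σ : ℂ) (hσ : ∀ n : ℤ, 2 * σ ≠ (n : ℂ)) :
    (∀ t : ℂ, Summable fun p : YoungDiagram × YoungDiagram => ‖blockTerm σ t p‖) ∧
    (∀ s : Set ℂ, Bornology.IsBounded s →
      TendstoUniformlyOn
        (fun (F : Finset (YoungDiagram × YoungDiagram)) (t : ℂ) => ∑ p ∈ F, blockTerm σ t p)
        (fun t => ∑' p : YoungDiagram × YoungDiagram, blockTerm σ t p)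
        Filter.atTop s) := by
  obtain ⟨δ, hδ, hδσ⟩ := exists_pos_le_norm_intCast_add hσ
  have hmajorant (C : ℝ) (hC : 0 ≤ C) :=
    summable_rowWeight_mul_rowWeight (div_nonneg hC (sq_nonneg δ))
  refine ⟨fun t => ?_, fun s hs => ?_⟩
  · exact (hmajorant _ (norm_nonneg t)).of_nonneg_of_le (fun _ => norm_nonneg _)
      (norm_blockTerm_le hδ hδσ le_rfl)
  · obtain ⟨C, hC⟩ := isBounded_iff_forall_norm_le.mp hs
    exact tendstoUniformlyOn_tsum (hmajorant _ (le_max_right C 0)) fun p t ht =>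
      norm_blockTerm_le hδ hδσ ((hC t ht).trans (le_max_left C 0)) p
end

section
/- Let u : (0,∞) → ℂ be twice differentiable and satisfy the radial sine-Gordon equation u'' + u'/r + sin u = 0. Define ζ : (0,∞) → ℂ by ζ(2^{-12} r⁴) = (r²/16) · [ (i u'(r)/2 + 1/r)² + cos(u(r))/2 ] for r > 0. Then ζ satisfies the σ-form of the Painlevé III₃ equation: (t ζ''(t))² = 4 (ζ'(t))² (ζ(t) − t ζ'(t)) − 4 ζ'(t) for all t > 0. -/
/-!
Put `t = 2⁻¹² r⁴`, i.e. `r = 8 t^{1/4}`, so that `dr/dt = 1024 / r³`, and write `w = e^{-iu}`.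
The sine-Gordon equation is exactly what makes the `r`-derivative of
`ζ = (r²/16)[(iu'/2 + 1/r)² + cos u / 2]` collapse to `r w / 16`; hence `ζ' = 64 w / r²` and
`ζ'' = -2¹⁶ w (i r u' + 2) / r⁶`. Substituting these, the σ-form becomes a polynomial identity
in `r, u', cos u, w` that follows from `w (2 cos u - w) = e^{-iu} e^{iu} = 1` alone.
-/

open Complex

noncomputable def radialVar (t : ℝ) : ℝ := 8 * t ^ (1 / 4 : ℝ)

section radialVar

variable {t : ℝ}

lemma radialVar_pos (ht : 0 < t) : 0 < radialVar t := by
  unfold radialVar; positivity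

lemma rpow_one_div_four_pow_four (ht : 0 ≤ t) : (t ^ (1 / 4 : ℝ)) ^ 4 = t := by
  rw [← Real.rpow_natCast, ← Real.rpow_mul ht]
  norm_num

lemma radialVar_pow_four (ht : 0 ≤ t) : radialVar t ^ 4 = 4096 * t := by
  rw [radialVar, mul_pow, rpow_one_div_four_pow_four ht]
  norm_num

lemma hasDerivAt_radialVar (ht : 0 < t) :
    HasDerivAt radialVar (1024 / radialVar t ^ 3) t := by
  refine ((Real.hasDerivAt_rpow_const (Or.inl ht.ne')).const_mul 8).congr_deriv ?_
  rw [Real.rpow_sub_one ht.ne', radialVar]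
  nth_rewrite 2 [← rpow_one_div_four_pow_four ht.le]
  field_simp
  ring

lemma HasDerivAt.comp_radialVar {g : ℝ → ℂ} {g' : ℂ} (hg : HasDerivAt g g' (radialVar t))
    (ht : 0 < t) :
    HasDerivAt (fun s => g (radialVar s)) (1024 / (radialVar t : ℂ) ^ 3 * g') t := by
  refine (hg.scomp t (hasDerivAt_radialVar ht)).congr_deriv ?_
  rw [Complex.real_smul]
  push_cast
  rfl

end radialVar

/-- `e^{-iu(r)}`. -/
noncomputable def phase (u : ℝ → ℂ) (r : ℝ) : ℂ := cos (u r) - sin (u r) * I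

/-- `ζ(2⁻¹² r⁴)` with the square expanded, which removes the `1/r`. -/
noncomputable def zetaRadial (u du : ℝ → ℂ) (r : ℝ) : ℂ :=
  -((r : ℂ) ^ 2 * du r ^ 2) / 64 + I * r * du r / 16 + 1 / 16 + (r : ℂ) ^ 2 * cos (u r) / 32

section sineGordon

variable {u du ddu : ℝ → ℂ} {r : ℝ}

lemma phase_mul_two_cos_sub_phase : phase u r * (2 * cos (u r) - phase u r) = 1 := by
  rw [phase]
  linear_combination sin_sq_add_cos_sq (u r) - sin (u r) ^ 2 * I_sq

lemma hasDerivAt_phase (hu : HasDerivAt u (du r) r) :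
    HasDerivAt (phase u) (-(I * du r * phase u r)) r := by
  refine (((hasDerivAt_cos (u r)).comp r hu).sub
    (((hasDerivAt_sin (u r)).comp r hu).mul_const I)).congr_deriv ?_
  rw [phase]
  linear_combination -(du r * sin (u r)) * I_sq

lemma zetaRadial_eq (hr : r ≠ 0) :
    (r : ℂ) ^ 2 / 16 * ((I * du r / 2 + 1 / (r : ℂ)) ^ 2 + cos (u r) / 2) =
      zetaRadial u du r := by
  have hr' : (r : ℂ) ≠ 0 := by exact_mod_cast hr
  rw [zetaRadial]
  field_simp
  linear_combination 2048 * (r : ℂ) ^ 2 * du r ^ 2 * I_sq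

lemma hasDerivAt_zetaRadial (hu : HasDerivAt u (du r) r) (hdu : HasDerivAt du (ddu r) r)
    (hr : r ≠ 0) (hSG : ddu r + du r / r + sin (u r) = 0) :
    HasDerivAt (zetaRadial u du) (r / 16 * phase u r) r := by
  have hr' : (r : ℂ) ≠ 0 := by exact_mod_cast hr
  have hx := hasDerivAt_id r |>.ofReal_comp
  have hcos := (hasDerivAt_cos (u r)).comp r hu
  refine (((((hx.pow 2).mul (hdu.pow 2)).neg.div_const 64).add
    (((hx.const_mul I).mul hdu).div_const 16)).add_const (1 / 16) |>.add
    (((hx.pow 2).mul hcos).div_const 32)).congr_deriv ?_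
  field_simp at hSG
  rw [phase]
  simp only [id, ofReal_one, Function.comp_apply, Pi.pow_apply]
  linear_combination (I / 16 - r * du r / 32) * hSG

lemma hasDerivAt_phase_div_sq (hu : HasDerivAt u (du r) r) (hr : r ≠ 0) :
    HasDerivAt (fun x : ℝ => 64 * phase u x / (x : ℂ) ^ 2)
      (-64 * phase u r * (I * du r * r + 2) / (r : ℂ) ^ 3) r := by
  have hr' : (r : ℂ) ≠ 0 := by exact_mod_cast hr
  have hx := hasDerivAt_id r |>.ofReal_comp
  refine (((hasDerivAt_phase hu).const_mul 64).div (hx.pow 2) (by simpa using hr')).congr_deriv ?_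
  field_simp
  simp only [id, ofReal_one, Pi.pow_apply]
  ring

lemma sigma_form_of_radial (r v c w : ℂ) (hr : r ≠ 0) (hw : w * (2 * c - w) = 1) :
    (r ^ 4 / 4096 * (1024 / r ^ 3 * (-64 * w * (I * v * r + 2) / r ^ 3))) ^ 2 =
      4 * (64 * w / r ^ 2) ^ 2 *
        (-(r ^ 2 * v ^ 2) / 64 + I * r * v / 16 + 1 / 16 + r ^ 2 * c / 32 -
          r ^ 4 / 4096 * (64 * w / r ^ 2)) - 4 * (64 * w / r ^ 2) := by
  field_simp
  linear_combination 2 ^ 35 * (w ^ 2 * r ^ 2 * v ^ 2 * I_sq - w * r ^ 2 * hw)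

end sineGordon

open Complex in
/-- If `u` solves the radial sine-Gordon equation `u'' + u'/r + sin u = 0` on `(0,∞)`
and `ζ(2^{-12}r⁴) = (r²/16)[(iu'/2 + 1/r)² + cos(u)/2]`, then `ζ` satisfies the σ-form
of Painlevé III₃: `(tζ'')² = 4(ζ')²(ζ − tζ') − 4ζ'` on `(0,∞)`. -/
theorem sigma_form_PIII (u du ddu : ℝ → ℂ)
    (hdu : ∀ r ∈ Set.Ioi (0 : ℝ), HasDerivAt u (du r) r)
    (hddu : ∀ r ∈ Set.Ioi (0 : ℝ), HasDerivAt du (ddu r) r)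
    (hSG : ∀ r ∈ Set.Ioi (0 : ℝ), ddu r + du r / (r : ℂ) + Complex.sin (u r) = 0)
    (ζ : ℝ → ℂ)
    (hζ : ∀ r ∈ Set.Ioi (0 : ℝ),
      ζ (2 ^ (-12 : ℤ) * r ^ 4) =
        ((r : ℂ) ^ 2 / 16) *
          ((Complex.I * du r / 2 + 1 / (r : ℂ)) ^ 2 + Complex.cos (u r) / 2)) :
    ∃ dζ ddζ : ℝ → ℂ, ∀ t ∈ Set.Ioi (0 : ℝ),
      HasDerivAt ζ (dζ t) t ∧ HasDerivAt dζ (ddζ t) t ∧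
      ((t : ℂ) * ddζ t) ^ 2 =
        4 * (dζ t) ^ 2 * (ζ t - (t : ℂ) * dζ t) - 4 * dζ t := by
  have hζρ : Set.EqOn ζ (fun t => zetaRadial u du (radialVar t)) (Set.Ioi 0) := by
    intro t ht
    have hr := radialVar_pos ht
    dsimp only
    rw [← zetaRadial_eq hr.ne', ← hζ _ hr, radialVar_pow_four ht.le]
    norm_num [← mul_assoc]
  refine ⟨fun t => 64 * phase u (radialVar t) / (radialVar t : ℂ) ^ 2,
    fun t => 1024 / (radialVar t : ℂ) ^ 3 * (-64 * phase u (radialVar t) *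
      (I * du (radialVar t) * radialVar t + 2) / (radialVar t : ℂ) ^ 3), fun t ht => ?_⟩
  have hr : 0 < radialVar t := radialVar_pos ht
  have hr' : (radialVar t : ℂ) ≠ 0 := by exact_mod_cast hr.ne'
  refine ⟨?_, (hasDerivAt_phase_div_sq (hdu _ hr) hr.ne').comp_radialVar ht, ?_⟩
  · refine (Filter.eventuallyEq_of_mem (isOpen_Ioi.mem_nhds ht) hζρ).hasDerivAt_iff.mpr
      ((hasDerivAt_zetaRadial (hdu _ hr) (hddu _ hr) hr.ne' (hSG _ hr)).comp_radialVar ht)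
      |>.congr_deriv ?_
    field_simp
    ring
  · have htr : (t : ℂ) = (radialVar t : ℂ) ^ 4 / 4096 := by
      have h4 : (radialVar t : ℂ) ^ 4 = 4096 * t := by exact_mod_cast radialVar_pow_four ht.le
      rw [h4]
      ring
    rw [hζρ ht, htr]
    exact sigma_form_of_radial _ _ _ _ hr' phase_mul_two_cos_sub_phase
end

section
/- Let u : (0,∞) → ℂ be twice differentiable and satisfy the radial sine-Gordon equation u'' + u'/r + sin u = 0. Define q : (0,∞) → ℂ by q(2^{-6} r²) = −e^{i u(r)} for r > 0. Then q satisfies the Painlevé III₃ equation in standard form: q''(s) = (q'(s))²/q(s) − q'(s)/s + 8(q(s)² − 1)/s for all s > 0. -/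
/-! Substituting `r = 8√s` turns the radial operator into an Euler operator: for `v s = u (8√s)`
one has `s v'' + v' = 16 (u'' + u'/r)`, so `v` solves `s v'' + v' + 16 sin v = 0`.
For `q = -exp (i v)` we get `q' = i v' q` and `q'' - q'^2/q + q'/s = i q (v'' + v'/s)`,
and `sin v = (q - q⁻¹) i / 2` turns the right-hand side into `8 (q^2 - 1)/s`. -/

open Complex Set

section RadialChangeOfVariable

variable {E : Type*} [NormedAddCommGroup E] [NormedSpace ℝ E] {c s : ℝ}

theorem HasDerivAt.comp_const_mul_sqrt {f : ℝ → E} {f' : E} (hs : 0 < s)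
    (hf : HasDerivAt f f' (c * √s)) :
    HasDerivAt (fun t ↦ f (c * √t)) ((c / (2 * √s)) • f') s := by
  have h := hf.scomp s ((Real.hasDerivAt_sqrt hs.ne').const_mul c)
  rwa [mul_one_div] at h

theorem hasDerivAt_const_div_two_mul_sqrt (hs : 0 < s) :
    HasDerivAt (fun t ↦ c / (2 * √t)) (-(c / (4 * s * √s))) s := by
  have hsqrt : 0 < √s := Real.sqrt_pos.mpr hs
  have h := (hasDerivAt_const s c).div ((Real.hasDerivAt_sqrt hs.ne').const_mul 2)
    (by positivity)
  refine h.congr_deriv ?_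
  field_simp
  rw [Real.sq_sqrt hs.le]
  ring

theorem euler_operator_comp_const_mul_sqrt (hc : c ≠ 0) (hs : 0 < s) (a b : E) :
    s • ((-(c / (4 * s * √s))) • a + (c ^ 2 / (4 * s)) • b) + (c / (2 * √s)) • a =
      (c ^ 2 / 4) • (b + (c * √s)⁻¹ • a) := by
  have hsqrt : 0 < √s := Real.sqrt_pos.mpr hs
  match_scalars
  · field_simp
    ring
  · field_simp

theorem exists_hasDerivAt_comp_const_mul_sqrt {f df ddf : ℝ → E} (hc : 0 < c)
    (hdf : ∀ r ∈ Ioi (0 : ℝ), HasDerivAt f (df r) r)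
    (hddf : ∀ r ∈ Ioi (0 : ℝ), HasDerivAt df (ddf r) r) :
    ∃ dg ddg : ℝ → E, ∀ s ∈ Ioi (0 : ℝ),
      HasDerivAt (fun t ↦ f (c * √t)) (dg s) s ∧ HasDerivAt dg (ddg s) s ∧
        s • ddg s + dg s = (c ^ 2 / 4) • (ddf (c * √s) + (c * √s)⁻¹ • df (c * √s)) := by
  refine ⟨fun t ↦ (c / (2 * √t)) • df (c * √t),
    fun t ↦ (-(c / (4 * t * √t))) • df (c * √t) + (c ^ 2 / (4 * t)) • ddf (c * √t),
    fun s hs ↦ ?_⟩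
  have hr : c * √s ∈ Ioi 0 := mul_pos hc (Real.sqrt_pos.mpr hs)
  refine ⟨(hdf _ hr).comp_const_mul_sqrt hs, ?_,
    euler_operator_comp_const_mul_sqrt hc.ne' hs _ _⟩
  refine ((hasDerivAt_const_div_two_mul_sqrt hs).smul
    ((hddf _ hr).comp_const_mul_sqrt hs)).congr_deriv ?_
  rw [smul_smul, add_comm]
  congr 2
  field_simp
  rw [Real.sq_sqrt hs.le]
  ring

end RadialChangeOfVariable

theorem sin_eq_of_eq_neg_cexp {q v : ℂ} (hq : q = -cexp (I * v)) :
    sin v = (q - q⁻¹) * I / 2 := by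
  rw [sin, hq, neg_mul, exp_neg, mul_comm v I]
  ring

theorem painleveIII_of_euler_sineGordon {q v dv ddv s α : ℂ} (hs : s ≠ 0)
    (hq : q = -cexp (I * v)) (h : s * ddv + dv + 2 * α * sin v = 0) :
    I * ddv * q + I * dv * (I * dv * q) =
      (I * dv * q) ^ 2 / q - I * dv * q / s + α * (q ^ 2 - 1) / s := by
  have hq0 : q ≠ 0 := hq ▸ neg_ne_zero.mpr (exp_ne_zero _)
  rw [sin_eq_of_eq_neg_cexp hq] at h
  field_simp at h ⊢
  linear_combination I * h - α * (q ^ 2 - 1) * I_sq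

theorem exists_painleveIII_of_eq_neg_cexp {q v dv ddv : ℝ → ℂ} {α : ℂ}
    (hq : ∀ s ∈ Ioi (0 : ℝ), q s = -cexp (I * v s))
    (hv : ∀ s ∈ Ioi (0 : ℝ), HasDerivAt v (dv s) s)
    (hdv : ∀ s ∈ Ioi (0 : ℝ), HasDerivAt dv (ddv s) s)
    (heuler : ∀ s ∈ Ioi (0 : ℝ), s * ddv s + dv s + 2 * α * sin (v s) = 0) :
    ∃ dq ddq : ℝ → ℂ, ∀ s ∈ Ioi (0 : ℝ),
      HasDerivAt q (dq s) s ∧ HasDerivAt dq (ddq s) s ∧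
        ddq s = dq s ^ 2 / q s - dq s / s + α * (q s ^ 2 - 1) / s := by
  have hq' : ∀ s ∈ Ioi (0 : ℝ), HasDerivAt q (I * dv s * q s) s := fun s hs ↦ by
    have hexp := ((hv s hs).const_mul I).cexp.neg
    have hloc : (fun t ↦ -cexp (I * v t)) =ᶠ[nhds s] q :=
      Filter.eventuallyEq_of_mem (isOpen_Ioi.mem_nhds hs) fun t ht ↦ (hq t ht).symm
    refine (hloc.hasDerivAt_iff.mp hexp).congr_deriv ?_
    rw [hq s hs]
    ring
  refine ⟨fun t ↦ I * dv t * q t, fun t ↦ I * ddv t * q t + I * dv t * (I * dv t * q t),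
    fun s hs ↦ ⟨hq' s hs, ((hdv s hs).const_mul I).mul (hq' s hs),
      painleveIII_of_euler_sineGordon (ofReal_ne_zero.mpr hs.ne') (hq s hs) (heuler s hs)⟩⟩

/-- If `u` solves the radial sine-Gordon equation `u'' + u'/r + sin u = 0` on `(0,∞)`
and `q(2^{-6}r²) = −e^{iu(r)}`, then `q` satisfies Painlevé III₃ in standard form:
`q'' = (q')²/q − q'/s + 8(q² − 1)/s` on `(0,∞)`. -/
theorem standard_form_PIII (u du ddu : ℝ → ℂ)
    (hdu : ∀ r ∈ Set.Ioi (0 : ℝ), HasDerivAt u (du r) r)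
    (hddu : ∀ r ∈ Set.Ioi (0 : ℝ), HasDerivAt du (ddu r) r)
    (hSG : ∀ r ∈ Set.Ioi (0 : ℝ), ddu r + du r / (r : ℂ) + Complex.sin (u r) = 0)
    (q : ℝ → ℂ)
    (hq : ∀ r ∈ Set.Ioi (0 : ℝ),
      q (2 ^ (-6 : ℤ) * r ^ 2) = -Complex.exp (Complex.I * u r)) :
    ∃ dq ddq : ℝ → ℂ, ∀ s ∈ Set.Ioi (0 : ℝ),
      HasDerivAt q (dq s) s ∧ HasDerivAt dq (ddq s) s ∧
      ddq s = (dq s) ^ 2 / q s - dq s / (s : ℂ) + 8 * (q s ^ 2 - 1) / (s : ℂ) := by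
  obtain ⟨dv, ddv, hv⟩ := exists_hasDerivAt_comp_const_mul_sqrt (c := 8) (by norm_num) hdu hddu
  have hr : ∀ s ∈ Ioi (0 : ℝ), 8 * √s ∈ Ioi (0 : ℝ) := fun s hs ↦
    mul_pos (by norm_num) (Real.sqrt_pos.mpr hs)
  refine exists_painleveIII_of_eq_neg_cexp (fun s hs ↦ ?_) (fun s hs ↦ (hv s hs).1)
    (fun s hs ↦ (hv s hs).2.1) (fun s hs ↦ ?_)
  · have hscale : 2 ^ (-6 : ℤ) * (8 * √s) ^ 2 = s := by
      rw [mul_pow, Real.sq_sqrt (le_of_lt hs), ← mul_assoc]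
      norm_num
    simpa only [hscale] using hq _ (hr s hs)
  · have heuler := (hv s hs).2.2
    have hSGs := hSG _ (hr s hs)
    simp only [real_smul, div_eq_mul_inv] at heuler hSGs
    push_cast at heuler hSGs
    linear_combination heuler + 16 * hSGs
end

section
/- Let u : (0,∞) → ℂ be twice differentiable and satisfy the radial sine-Gordon equation u'' + u'/r + sin u = 0. Define h(r) = (r/4)[(i u'(r)/2 + 1/r)² + cos(u(r))/2]. Then for all r > 0, (4/r) · d/dr ( r · h(r) ) = e^{−i u(r)}. -/
/-!
Multiplying out, `r h(r) = (i r u' + 2)² / 16 + r² cos u / 8`. The radial sine-Gordon equation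
is the divergence form `(r u')' = -r sin u`, and with it the derivative of the right-hand side
collapses to `(r / 4)(cos u - i sin u) = (r / 4) e^{-iu}`.
-/

open Complex

lemma Complex.hasDerivAt_ofReal (r : ℝ) : HasDerivAt (fun x : ℝ => (x : ℂ)) 1 r := by
  simpa using (hasDerivAt_id r).ofReal_comp

lemma Complex.exp_neg_I_mul (z : ℂ) : exp (-(I * z)) = cos z - sin z * I := by
  rw [show -(I * z) = -z * I by ring, exp_mul_I, cos_neg, sin_neg, neg_mul, sub_eq_add_neg]

lemma ofReal_mul_sq_add_cos_eq (x : ℝ) (hx : x ≠ 0) (v w : ℂ) :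
    (x : ℂ) * ((x / 4) * ((I * v / 2 + 1 / x) ^ 2 + cos w / 2)) =
      (I * (x * v) + 2) ^ 2 / 16 + x ^ 2 * cos w / 8 := by
  have hxc : (x : ℂ) ≠ 0 := by exact_mod_cast hx
  field_simp
  ring

lemma hasDerivAt_ofReal_mul_of_radial_sineGordon {u du ddu : ℝ → ℂ} {r : ℝ} (hr : r ≠ 0)
    (hddu : HasDerivAt du (ddu r) r) (hSG : ddu r + du r / r + sin (u r) = 0) :
    HasDerivAt (fun x : ℝ => (x : ℂ) * du x) (-(r * sin (u r))) r := by
  have hrc : (r : ℂ) ≠ 0 := by exact_mod_cast hr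
  refine ((hasDerivAt_ofReal r).mul hddu).congr_deriv ?_
  field_simp at hSG
  linear_combination hSG

lemma hasDerivAt_sq_add_cos_of_radial_sineGordon {u du : ℝ → ℂ} {r : ℝ}
    (hdu : HasDerivAt u (du r) r)
    (hflux : HasDerivAt (fun x : ℝ => (x : ℂ) * du x) (-(r * sin (u r))) r) :
    HasDerivAt (fun x : ℝ => (I * (x * du x) + 2) ^ 2 / 16 + x ^ 2 * cos (u x) / 8)
      (r / 4 * exp (-(I * u r))) r := by
  have hcos : HasDerivAt (fun x => cos (u x)) (-sin (u r) * du r) r :=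
    (hasDerivAt_cos (u r)).comp r hdu
  refine (((((hflux.const_mul I).add_const 2).pow 2).div_const 16).add
    ((((hasDerivAt_ofReal r).pow 2).mul hcos).div_const 8)).congr_deriv ?_
  rw [exp_neg_I_mul]
  simp only [Pi.pow_apply]
  linear_combination -((r : ℂ) ^ 2 * du r * sin (u r) / 8) * I_sq

/-- If `u` solves the radial sine-Gordon equation `u'' + u'/r + sin u = 0` on `(0,∞)`
and `h(r) = (r/4)[(iu'(r)/2 + 1/r)² + cos(u(r))/2]`, then
`(4/r) d/dr (r h(r)) = e^{−iu(r)}` for all `r > 0`. -/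
theorem tau_log_deriv_inversion (u du ddu : ℝ → ℂ)
    (hdu : ∀ r ∈ Set.Ioi (0 : ℝ), HasDerivAt u (du r) r)
    (hddu : ∀ r ∈ Set.Ioi (0 : ℝ), HasDerivAt du (ddu r) r)
    (hSG : ∀ r ∈ Set.Ioi (0 : ℝ), ddu r + du r / (r : ℂ) + Complex.sin (u r) = 0)
    (h : ℝ → ℂ)
    (hh : ∀ r ∈ Set.Ioi (0 : ℝ),
      h r = ((r : ℂ) / 4) *
        ((Complex.I * du r / 2 + 1 / (r : ℂ)) ^ 2 + Complex.cos (u r) / 2)) :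
    ∀ r ∈ Set.Ioi (0 : ℝ), ∃ d : ℂ,
      HasDerivAt (fun x : ℝ => (x : ℂ) * h x) d r ∧
      (4 / (r : ℂ)) * d = Complex.exp (-(Complex.I * u r)) := by
  intro r hr
  have hr0 : r ≠ 0 := (Set.mem_Ioi.mp hr).ne'
  have hflux := hasDerivAt_ofReal_mul_of_radial_sineGordon hr0 (hddu r hr) (hSG r hr)
  refine ⟨_, (hasDerivAt_sq_add_cos_of_radial_sineGordon (hdu r hr) hflux).congr_of_eventuallyEq
    ?_, ?_⟩
  · filter_upwards [Ioi_mem_nhds hr] with x hx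
    rw [hh x hx, ofReal_mul_sq_add_cos_eq x (Set.mem_Ioi.mp hx).ne']
  · have hrc : (r : ℂ) ≠ 0 := by exact_mod_cast hr0
    field_simp
end

section
/- Let U ⊆ ℂ² be open and let η, ρ : U → ℂ be differentiable functions of (σ,ν) satisfying sin(2πη(σ,ν)) = e^{πν} sin(2πσ) and e^{4πiρ(σ,ν)} sin(2π(σ+η(σ,ν))) = sin(2πη(σ,ν)) on U, and assume cos(2πη), sin(2πσ), sin(2π(σ+η)) do not vanish on U. Then on U: (i) ∂η/∂σ = cot(2πσ) tan(2πη); (ii) ∂η/∂ν = tan(2πη)/2; (iii) ∂ρ/∂σ = −(i/2) tan(2πη), so that ∂η/∂ν = i ∂ρ/∂σ; (iv) ∂ρ/∂ν = sin(2πσ) / (4i cos(2πη) sin(2π(σ+η))). -/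
/-!
Both defining relations have the shape `e^f sin g = sin h`, so differentiating along a
coordinate line gives the logarithmic-derivative identity `f' = h' cot h - g' cot g`.
Along σ and along ν the first relation then yields the partial derivatives of η; substituting
them into the second and expanding `sin (2πσ + 2πη)` and `cos (2πσ + 2πη)` by the addition
formulas yields those of ρ.
-/

open Complex Filter Topology

/-- The identity `f' = h' cot h - g' cot g`, multiplied through by `sin g * sin h`. -/
theorem HasDerivAt.mul_sin_mul_sin_of_eventually_exp_mul_sin_eq {f g h : ℂ → ℂ}
    {f' g' h' t : ℂ} (hf : HasDerivAt f f' t) (hg : HasDerivAt g g' t) (hh : HasDerivAt h h' t)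
    (hrel : ∀ᶠ s in 𝓝 t, Complex.exp (f s) * Complex.sin (g s) = Complex.sin (h s)) :
    f' * Complex.sin (g t) * Complex.sin (h t) =
      h' * Complex.cos (h t) * Complex.sin (g t) - g' * Complex.cos (g t) * Complex.sin (h t) := by
  have hderiv : Complex.exp (f t) * f' * Complex.sin (g t) +
      Complex.exp (f t) * (Complex.cos (g t) * g') = Complex.cos (h t) * h' :=
    (hf.cexp.mul hg.csin).unique (hh.csin.congr_of_eventuallyEq hrel)
  linear_combination Complex.sin (g t) * hderiv -
    (f' * Complex.sin (g t) + g' * Complex.cos (g t)) * hrel.self_of_nhds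

theorem monodromy_derivs_sigma {η ρ : ℂ → ℂ} {σ ν ησ ρσ : ℂ}
    (hη : HasDerivAt η ησ σ) (hρ : HasDerivAt ρ ρσ σ)
    (hrel1 : ∀ᶠ s in 𝓝 σ, sin (2 * Real.pi * η s) = exp (Real.pi * ν) * sin (2 * Real.pi * s))
    (hrel2 : ∀ᶠ s in 𝓝 σ, exp (4 * Real.pi * I * ρ s) * sin (2 * Real.pi * (s + η s)) =
      sin (2 * Real.pi * η s))
    (hcos : cos (2 * Real.pi * η σ) ≠ 0) (hsin : sin (2 * Real.pi * σ) ≠ 0)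
    (hsin' : sin (2 * Real.pi * (σ + η σ)) ≠ 0) :
    ησ = cot (2 * Real.pi * σ) * tan (2 * Real.pi * η σ) ∧
      ρσ = -(I / 2) * tan (2 * Real.pi * η σ) := by
  have hπ : (Real.pi : ℂ) ≠ 0 := ofReal_ne_zero.mpr Real.pi_ne_zero
  have hsiny : sin (2 * Real.pi * η σ) ≠ 0 := by
    rw [hrel1.self_of_nhds]; exact mul_ne_zero (exp_ne_zero _) hsin
  have h1 := HasDerivAt.mul_sin_mul_sin_of_eventually_exp_mul_sin_eq
    (hasDerivAt_const σ ((Real.pi : ℂ) * ν))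
    ((hasDerivAt_id σ).const_mul (2 * (Real.pi : ℂ))) (hη.const_mul (2 * (Real.pi : ℂ)))
    (hrel1.mono fun _ hs => hs.symm)
  have h2 := (hρ.const_mul (4 * (Real.pi : ℂ) * I)).mul_sin_mul_sin_of_eventually_exp_mul_sin_eq
    (((hasDerivAt_id σ).add hη).const_mul (2 * (Real.pi : ℂ))) (hη.const_mul (2 * (Real.pi : ℂ)))
    hrel2
  have hsum : 2 * (Real.pi : ℂ) * (σ + η σ) = 2 * Real.pi * σ + 2 * Real.pi * η σ := by ring
  simp only [Pi.add_apply, id, hsum, sin_add, cos_add] at h1 h2 hsin'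
  set x := 2 * (Real.pi : ℂ) * σ
  set y := 2 * (Real.pi : ℂ) * η σ
  have hησ : ησ * cos y * sin x = cos x * sin y :=
    mul_left_cancel₀ (mul_ne_zero two_ne_zero hπ) (by linear_combination -h1)
  have hρσ : 2 * I * ρσ * cos y = sin y := by
    refine mul_left_cancel₀ (a := 2 * Real.pi * (sin x * sin y * (sin x * cos y + cos x * sin y)))
      (by simp [hπ, hsin, hsiny, hsin']) ?_
    linear_combination (sin x * cos y) * h2 + 2 * Real.pi *
      (cos y * (sin x * cos y + cos x * sin y) - sin y * (cos x * cos y - sin x * sin y)) * hησ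
  constructor
  · rw [cot_eq_cos_div_sin, tan_eq_sin_div_cos]
    field_simp
    linear_combination hησ
  · rw [tan_eq_sin_div_cos]
    field_simp
    linear_combination (-I) * hρσ + 2 * ρσ * cos y * I_sq

theorem monodromy_derivs_nu {η ρ : ℂ → ℂ} {σ ν ην ρν : ℂ}
    (hη : HasDerivAt η ην ν) (hρ : HasDerivAt ρ ρν ν)
    (hrel1 : ∀ᶠ n in 𝓝 ν, sin (2 * Real.pi * η n) = exp (Real.pi * n) * sin (2 * Real.pi * σ))
    (hrel2 : ∀ᶠ n in 𝓝 ν, exp (4 * Real.pi * I * ρ n) * sin (2 * Real.pi * (σ + η n)) =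
      sin (2 * Real.pi * η n))
    (hcos : cos (2 * Real.pi * η ν) ≠ 0) (hsin : sin (2 * Real.pi * σ) ≠ 0)
    (hsin' : sin (2 * Real.pi * (σ + η ν)) ≠ 0) :
    ην = tan (2 * Real.pi * η ν) / 2 ∧
      ρν = sin (2 * Real.pi * σ) /
        (4 * I * cos (2 * Real.pi * η ν) * sin (2 * Real.pi * (σ + η ν))) := by
  have hπ : (Real.pi : ℂ) ≠ 0 := ofReal_ne_zero.mpr Real.pi_ne_zero
  have hsiny : sin (2 * Real.pi * η ν) ≠ 0 := by
    rw [hrel1.self_of_nhds]; exact mul_ne_zero (exp_ne_zero _) hsin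
  have h1 :=
    ((hasDerivAt_id ν).const_mul (Real.pi : ℂ)).mul_sin_mul_sin_of_eventually_exp_mul_sin_eq
    (hasDerivAt_const ν (2 * (Real.pi : ℂ) * σ)) (hη.const_mul (2 * (Real.pi : ℂ)))
    (hrel1.mono fun _ hs => hs.symm)
  have h2 := (hρ.const_mul (4 * (Real.pi : ℂ) * I)).mul_sin_mul_sin_of_eventually_exp_mul_sin_eq
    (((hasDerivAt_const ν σ).add hη).const_mul (2 * (Real.pi : ℂ)))
    (hη.const_mul (2 * (Real.pi : ℂ))) hrel2
  have hsum : 2 * (Real.pi : ℂ) * (σ + η ν) = 2 * Real.pi * σ + 2 * Real.pi * η ν := by ring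
  simp only [Pi.add_apply, hsum, sin_add, cos_add] at h1 h2 hsin' ⊢
  set x := 2 * (Real.pi : ℂ) * σ
  set y := 2 * (Real.pi : ℂ) * η ν
  have hην : 2 * ην * cos y = sin y :=
    mul_left_cancel₀ (mul_ne_zero hπ hsin) (by linear_combination -h1)
  have hρν : 4 * I * ρν * cos y * (sin x * cos y + cos x * sin y) = sin x := by
    refine mul_left_cancel₀ (a := 2 * Real.pi * sin y) (by simp [hπ, hsiny]) ?_
    linear_combination (2 * cos y) * h2 + 2 * Real.pi * sin x * (cos y ^ 2 + sin y ^ 2) * hην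
      + 2 * Real.pi * sin x * sin y * sin_sq_add_cos_sq y
  constructor
  · rw [tan_eq_sin_div_cos]
    field_simp
    linear_combination hην
  · rw [eq_div_iff (by simp [hcos, hsin'])]
    linear_combination hρν

/-- If `η(σ,ν)` and `ρ(σ,ν)` are differentiable local solutions on an open set `U` of
`sin 2πη = e^{πν} sin 2πσ` and `e^{4πiρ} sin 2π(σ+η) = sin 2πη`, with
`cos 2πη`, `sin 2πσ`, `sin 2π(σ+η)` nonvanishing, then their partial derivatives are
given by: `∂η/∂σ = cot 2πσ tan 2πη`, `∂η/∂ν = tan(2πη)/2`,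
`∂ρ/∂σ = −(i/2) tan 2πη` (so `∂η/∂ν = i ∂ρ/∂σ`), and
`∂ρ/∂ν = sin 2πσ / (4i cos 2πη sin 2π(σ+η))`. -/
theorem monodromy_coordinate_derivatives (U : Set (ℂ × ℂ)) (hU : IsOpen U)
    (η ρ ησ ην ρσ ρν : ℂ → ℂ → ℂ)
    (hησ : ∀ p ∈ U, HasDerivAt (fun s => η s p.2) (ησ p.1 p.2) p.1)
    (hην : ∀ p ∈ U, HasDerivAt (fun n => η p.1 n) (ην p.1 p.2) p.2)
    (hρσ : ∀ p ∈ U, HasDerivAt (fun s => ρ s p.2) (ρσ p.1 p.2) p.1)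
    (hρν : ∀ p ∈ U, HasDerivAt (fun n => ρ p.1 n) (ρν p.1 p.2) p.2)
    (hrel1 : ∀ p ∈ U, Complex.sin (2 * Real.pi * η p.1 p.2) =
      Complex.exp (Real.pi * p.2) * Complex.sin (2 * Real.pi * p.1))
    (hrel2 : ∀ p ∈ U, Complex.exp (4 * Real.pi * Complex.I * ρ p.1 p.2) *
      Complex.sin (2 * Real.pi * (p.1 + η p.1 p.2)) = Complex.sin (2 * Real.pi * η p.1 p.2))
    (hcos : ∀ p ∈ U, Complex.cos (2 * Real.pi * η p.1 p.2) ≠ 0)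
    (hsin : ∀ p ∈ U, Complex.sin (2 * Real.pi * p.1) ≠ 0)
    (hsin' : ∀ p ∈ U, Complex.sin (2 * Real.pi * (p.1 + η p.1 p.2)) ≠ 0) :
    ∀ p ∈ U,
      ησ p.1 p.2 = Complex.cot (2 * Real.pi * p.1) * Complex.tan (2 * Real.pi * η p.1 p.2) ∧
      ην p.1 p.2 = Complex.tan (2 * Real.pi * η p.1 p.2) / 2 ∧
      ρσ p.1 p.2 = -(Complex.I / 2) * Complex.tan (2 * Real.pi * η p.1 p.2) ∧
      ην p.1 p.2 = Complex.I * ρσ p.1 p.2 ∧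
      ρν p.1 p.2 = Complex.sin (2 * Real.pi * p.1) /
        (4 * Complex.I * Complex.cos (2 * Real.pi * η p.1 p.2) *
          Complex.sin (2 * Real.pi * (p.1 + η p.1 p.2))) := by
  rintro ⟨σ, ν⟩ hp
  have hUσ : ∀ᶠ s in 𝓝 σ, (s, ν) ∈ U :=
    (continuous_id.prodMk continuous_const).continuousAt.preimage_mem_nhds (hU.mem_nhds hp)
  have hUν : ∀ᶠ n in 𝓝 ν, (σ, n) ∈ U :=
    (continuous_const.prodMk continuous_id).continuousAt.preimage_mem_nhds (hU.mem_nhds hp)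
  obtain ⟨hησ_eq, hρσ_eq⟩ := monodromy_derivs_sigma (hησ (σ, ν) hp) (hρσ (σ, ν) hp)
    (hUσ.mono fun s hs => hrel1 (s, ν) hs) (hUσ.mono fun s hs => hrel2 (s, ν) hs)
    (hcos (σ, ν) hp) (hsin (σ, ν) hp) (hsin' (σ, ν) hp)
  obtain ⟨hην_eq, hρν_eq⟩ := monodromy_derivs_nu (hην (σ, ν) hp) (hρν (σ, ν) hp)
    (hUν.mono fun n hn => hrel1 (σ, n) hn) (hUν.mono fun n hn => hrel2 (σ, n) hn)
    (hcos (σ, ν) hp) (hsin (σ, ν) hp) (hsin' (σ, ν) hp)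
  refine ⟨hησ_eq, hην_eq, hρσ_eq, ?_, hρν_eq⟩
  rw [hην_eq, hρσ_eq]
  linear_combination tan (2 * Real.pi * η σ ν) / 2 * I_sq
end

section
/- Let σ, η, ν, ρ ∈ ℂ satisfy sin(2πσ) ≠ 0, sin(2π(σ+η)) ≠ 0, e^{πν} sin(2πσ) = sin(2πη), and e^{4πiρ} sin(2π(σ+η)) = sin(2πη). Then the two identities 2 cos π(σ+η+iν/2) = e^{iπ(σ−η−iν/2−4ρ)} and 2 cos π(σ+η−iν/2) = e^{iπ(−σ+η−iν/2−4ρ)} hold. -/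
/-!
In the variables `u = e^{2πiσ}`, `v = e^{2πiη}`, `R = e^{πν}`, `F = e^{4πiρ}` one has
`2i sin 2πz = w - w⁻¹` with `w = e^{2πiz}`, so the hypotheses become the Laurent relations
`R (u - u⁻¹) = v - v⁻¹` and `F (uv - (uv)⁻¹) = v - v⁻¹`. Multiplying `2 cos w = e^c` by `e^{iw}`
turns each claimed identity into a rational one, `uv/R + 1 = u/F` resp. `uvR + 1 = vR/F`,
which follows from the two relations after clearing the nonzero factor `(u² - 1) v`.
-/

open Complex
open scoped Real

theorem Complex.sin_mul_two_I (z : ℂ) :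
    sin z * (2 * I) = exp (z * I) - (exp (z * I))⁻¹ := by
  rw [sin, ← exp_neg, ← neg_mul]
  linear_combination (exp (-z * I) - exp (z * I)) * I_sq

theorem Complex.two_cos_eq_exp_iff (w c : ℂ) :
    2 * cos w = exp c ↔ exp (2 * w * I) + 1 = exp (c + w * I) := by
  rw [exp_add, ← mul_left_inj' (exp_ne_zero (w * I)), cos, mul_div_cancel₀ _ two_ne_zero,
    add_mul, ← exp_add, ← exp_add, ← two_mul, neg_mul, neg_add_cancel, exp_zero, mul_assoc]

theorem div_add_one_eq_div_of_sub_inv_eq {K : Type*} [Field K] {u v R F : K} (hv : v ≠ 0)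
    (hR : R ≠ 0) (hF : F ≠ 0) (hu : u - u⁻¹ ≠ 0) (h₁ : R * (u - u⁻¹) = v - v⁻¹)
    (h₂ : F * (u * v - (u * v)⁻¹) = v - v⁻¹) :
    u * v / R + 1 = u / F ∧ u * v * R + 1 = v * R / F := by
  have hu0 : u ≠ 0 := by rintro rfl; simp at hu
  have hu2 : u ^ 2 - 1 ≠ 0 := by
    contrapose! hu; field_simp; linear_combination hu
  field_simp at h₁ h₂ ⊢
  constructor
  · apply mul_left_cancel₀ (mul_ne_zero hu2 hv)
    linear_combination (F - u) * h₁ + u * h₂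
  · apply mul_left_cancel₀ (mul_ne_zero hu2 hv)
    linear_combination (u * v * F - v) * h₁ + v * h₂

theorem cos_identities_general (σ η ν ρ : ℂ)
    (hσ : Complex.sin (2 * Real.pi * σ) ≠ 0)
    (hrel1 : Complex.exp (Real.pi * ν) * Complex.sin (2 * Real.pi * σ) =
      Complex.sin (2 * Real.pi * η))
    (hrel2 : Complex.exp (4 * Real.pi * Complex.I * ρ) *
      Complex.sin (2 * Real.pi * (σ + η)) = Complex.sin (2 * Real.pi * η)) :
    2 * Complex.cos (Real.pi * (σ + η + Complex.I * ν / 2)) =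
      Complex.exp (Complex.I * Real.pi * (σ - η - Complex.I * ν / 2 - 4 * ρ)) ∧
    2 * Complex.cos (Real.pi * (σ + η - Complex.I * ν / 2)) =
      Complex.exp (Complex.I * Real.pi * (-σ + η - Complex.I * ν / 2 - 4 * ρ)) := by
  set u := exp (2 * π * σ * I)
  set v := exp (2 * π * η * I)
  set R := exp (π * ν)
  set F := exp (4 * π * I * ρ)
  have huv : exp (2 * π * (σ + η) * I) = u * v := by rw [← exp_add]; ring_nf
  have hu : u - u⁻¹ ≠ 0 := by
    rw [← sin_mul_two_I]; exact mul_ne_zero hσ (mul_ne_zero two_ne_zero I_ne_zero)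
  have h₁ : R * (u - u⁻¹) = v - v⁻¹ := by
    rw [← sin_mul_two_I, ← sin_mul_two_I, ← hrel1]; ring
  have h₂ : F * (u * v - (u * v)⁻¹) = v - v⁻¹ := by
    rw [← huv, ← sin_mul_two_I, ← sin_mul_two_I, ← hrel2]; ring
  have e₁ : exp (2 * (π * (σ + η + I * ν / 2)) * I) = u * v / R := by
    rw [← exp_add, ← exp_sub]; congr 1; linear_combination (π * ν) * I_sq
  have e₂ : exp (I * π * (σ - η - I * ν / 2 - 4 * ρ) + π * (σ + η + I * ν / 2) * I) =
      u / F := by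
    rw [← exp_sub]; congr 1; ring
  have e₃ : exp (2 * (π * (σ + η - I * ν / 2)) * I) = u * v * R := by
    rw [← exp_add, ← exp_add]; congr 1; linear_combination (-π * ν) * I_sq
  have e₄ : exp (I * π * (-σ + η - I * ν / 2 - 4 * ρ) + π * (σ + η - I * ν / 2) * I) =
      v * R / F := by
    rw [← exp_add, ← exp_sub]; congr 1; linear_combination (-π * ν) * I_sq
  rw [two_cos_eq_exp_iff, two_cos_eq_exp_iff, e₁, e₂, e₃, e₄]
  exact div_add_one_eq_div_of_sub_inv_eq (exp_ne_zero _) (exp_ne_zero _) (exp_ne_zero _) hu h₁ h₂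

/-- Given the monodromy relations `e^{πν} sin 2πσ = sin 2πη` and
`e^{4πiρ} sin 2π(σ+η) = sin 2πη`, the identities
`2 cos π(σ+η±iν/2) = e^{iπ(±σ∓η−iν/2−4ρ)}` hold. -/
theorem cos_identities (σ η ν ρ : ℂ)
    (hσ : Complex.sin (2 * Real.pi * σ) ≠ 0)
    (hση : Complex.sin (2 * Real.pi * (σ + η)) ≠ 0)
    (hrel1 : Complex.exp (Real.pi * ν) * Complex.sin (2 * Real.pi * σ) =
      Complex.sin (2 * Real.pi * η))
    (hrel2 : Complex.exp (4 * Real.pi * Complex.I * ρ) *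
      Complex.sin (2 * Real.pi * (σ + η)) = Complex.sin (2 * Real.pi * η)) :
    2 * Complex.cos (Real.pi * (σ + η + Complex.I * ν / 2)) =
      Complex.exp (Complex.I * Real.pi * (σ - η - Complex.I * ν / 2 - 4 * ρ)) ∧
    2 * Complex.cos (Real.pi * (σ + η - Complex.I * ν / 2)) =
      Complex.exp (Complex.I * Real.pi * (-σ + η - Complex.I * ν / 2 - 4 * ρ)) :=
  cos_identities_general σ η ν ρ hσ hrel1 hrel2
end

section
/- Let σ, η, ν be real with 0 < η < σ < 1/4 and ν < 0, satisfying e^{πν} sin(2πσ) = sin(2πη). Then Log(1 + e^{2πi(σ+η−iν/2)}) − Log(1 + e^{−2πi(σ+η+iν/2)}) = 4πiη, where Log denotes the principal branch of the complex logarithm. -/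
/-!
Write `w = 2πi(σ + η − iν/2)`, so that `Re w = πν < 0` and `Im w = θ := 2π(σ + η)`. The second
argument of `Log` is `1 + exp (conj w) = conj (1 + exp w)`, and `1 + exp w` lies in the right
half-plane, so the difference of the two logarithms is `2i · arg (1 + exp w)`. Writing
`φ = 2πη ∈ (0, π/2)` and `r = e^{πν}`, the hypothesis `r sin (θ − φ) = sin φ` expands to
`r sin θ cos φ = (1 + r cos θ) sin φ`, i.e. `1 + r e^{iθ}` is a positive multiple of `e^{iφ}`;
hence `arg (1 + exp w) = φ`.
-/

open Complex ComplexConjugate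
open scoped Real

namespace Complex

theorem arg_eq_of_im_mul_cos_eq_re_mul_sin {z : ℂ} {φ : ℝ} (hre : 0 < z.re)
    (hφ : φ ∈ Set.Ioo (-(π / 2)) (π / 2)) (h : z.im * Real.cos φ = z.re * Real.sin φ) :
    arg z = φ := by
  have hcos : 0 < Real.cos φ := Real.cos_pos_of_mem_Ioo hφ
  have hpolar : z = ↑(z.re / Real.cos φ) * (cos φ + sin φ * I) := by
    apply Complex.ext <;> simp only [mul_re, mul_im, add_re, add_im, ofReal_re, ofReal_im,
      ← ofReal_cos, ← ofReal_sin, I_re, I_im] <;> field_simp <;> linarith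
  rw [hpolar, arg_mul_cos_add_sin_mul_I (div_pos hre hcos)
    ⟨by linarith [hφ.1, Real.pi_pos], by linarith [hφ.2, Real.pi_pos]⟩]

theorem log_sub_log_conj {z : ℂ} (h : z.arg ≠ π) : log z - log (conj z) = 2 * z.arg * I := by
  rw [log_conj z h, sub_conj, log_im]
  push_cast
  ring

theorem arg_one_add_exp {w : ℂ} {φ : ℝ} (hw : w.re < 0) (hφ : φ ∈ Set.Ioo (-(π / 2)) (π / 2))
    (h : Real.exp w.re * Real.sin (w.im - φ) = Real.sin φ) : arg (1 + exp w) = φ := by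
  have hr : Real.exp w.re < 1 := Real.exp_lt_one_iff.mpr hw
  apply arg_eq_of_im_mul_cos_eq_re_mul_sin _ hφ
  · simp only [add_re, add_im, one_re, one_im, exp_re, exp_im]
    rw [Real.sin_sub] at h
    linear_combination h
  · simp only [add_re, one_re, exp_re]
    nlinarith [Real.neg_one_le_cos w.im, Real.exp_pos w.re]

end Complex

/-- For real `0 < η < σ < 1/4` and `ν < 0` with `e^{πν} sin 2πσ = sin 2πη`, one has
`Log(1 + e^{2πi(σ+η−iν/2)}) − Log(1 + e^{−2πi(σ+η+iν/2)}) = 4πiη` (principal branch). -/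
theorem log_difference_identity (σ η ν : ℝ)
    (hη : 0 < η) (hησ : η < σ) (hσ : σ < 1 / 4) (hν : ν < 0)
    (hrel : Real.exp (Real.pi * ν) * Real.sin (2 * Real.pi * σ) =
      Real.sin (2 * Real.pi * η)) :
    Complex.log (1 + Complex.exp (2 * Real.pi * Complex.I *
        ((σ : ℂ) + (η : ℂ) - Complex.I * (ν : ℂ) / 2))) -
      Complex.log (1 + Complex.exp (-(2 * Real.pi * Complex.I *
        ((σ : ℂ) + (η : ℂ) + Complex.I * (ν : ℂ) / 2)))) =
      4 * Real.pi * Complex.I * (η : ℂ) := by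
  have hπ := Real.pi_pos
  set w : ℂ := 2 * π * I * (σ + η - I * ν / 2) with hw_def
  have hw : w = ↑(π * ν) + ↑(2 * π * (σ + η)) * I := by
    rw [hw_def]
    push_cast
    linear_combination (-(π : ℂ) * ν) * I_mul_I
  have hconj : -(2 * π * I * ((σ : ℂ) + η + I * ν / 2)) = conj w := by
    simp only [hw_def, map_mul, map_add, map_sub, map_div₀, conj_ofReal, conj_I, map_ofNat]
    ring
  have harg : arg (1 + exp w) = 2 * π * η := by
    refine arg_one_add_exp (by simp only [hw, add_re, ofReal_re, re_ofReal_mul, I_re]; nlinarith)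
      ⟨by nlinarith, by nlinarith⟩ ?_
    simp only [hw, add_re, add_im, ofReal_re, ofReal_im, re_ofReal_mul, im_ofReal_mul, I_re, I_im]
    rw [← hrel]
    ring_nf
  calc log (1 + exp w) - log (1 + exp (-(2 * π * I * ((σ : ℂ) + η + I * ν / 2))))
      = log (1 + exp w) - log (conj (1 + exp w)) := by rw [hconj, exp_conj, map_add, map_one]
    _ = 2 * arg (1 + exp w) * I := log_sub_log_conj (by rw [harg]; nlinarith)
    _ = 4 * π * I * η := by rw [harg]; push_cast; ring
end
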